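/- arXiv:2511.14568 — 2 statements merged into one kernel-verified Lean document; each statement's English description precedes it below -/
import Mathlib

section
/- Let 0 < p < 1 (geometric parameter). Set ē := L ∘ ( p·X·(1 + (1-p)·X)^{-1} ) ∈ ℝ⟦X⟧. Then for all natural numbers n ≥ k: c_n( ē^k / k! ) = Σ_{j=k}^{n} binom(n,j)·(n-1)_{n-j}·p^j·(p-1)^{n-j}·S₁(j,k). -/
open PowerSeries Finset

noncomputable section

/-- `cN n F = n! * (coefficient of X^n in F)`. -/
def cN (n : ℕ) (F : PowerSeries ℝ) : ℝ := (n.factorial : ℝ) * PowerSeries.coeff n F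

/-- Formal substitution `F ∘ G` (faithful when `G` has zero constant coefficient). -/
def pcomp (F G : PowerSeries ℝ) : PowerSeries ℝ :=
  PowerSeries.mk fun n =>
    ∑ k ∈ Finset.range (n + 1), (PowerSeries.coeff k F) * (PowerSeries.coeff n (G ^ k))

/-- The formal series of log(1+X). -/
def L : PowerSeries ℝ := PowerSeries.mk fun n => if n = 0 then 0 else (-1 : ℝ) ^ (n - 1) / n

/-- Falling factorial `(y)_m`. -/
def ff (y : ℝ) (m : ℕ) : ℝ := ∏ i ∈ Finset.range m, (y - i)

/-- Rising factorial `⟨y⟩_m`. -/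
def rf (y : ℝ) (m : ℕ) : ℝ := ∏ i ∈ Finset.range m, (y + i)

/-- Degenerate falling factorial `(x)_{n,λ}`. -/
def ffl (x : ℝ) (n : ℕ) (lam : ℝ) : ℝ := ∏ i ∈ Finset.range n, (x - i * lam)

/-- Stirling numbers of the second kind. -/
def S2 (n k : ℕ) : ℝ :=
  (k.factorial : ℝ)⁻¹ * ∑ j ∈ Finset.range (k + 1), (-1 : ℝ) ^ (k - j) * (k.choose j) * (j : ℝ) ^ n

/-- The falling factorial polynomial `x(x-1)⋯(x-n+1)`. -/
def fallingPoly (n : ℕ) : Polynomial ℝ := ∏ i ∈ Finset.range n, (Polynomial.X - Polynomial.C (i : ℝ))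

/-- (Signed) Stirling numbers of the first kind. -/
def S1 (n k : ℕ) : ℝ := (fallingPoly n).coeff k

/-- Degenerate Stirling numbers of the second kind. -/
def S2d (lam : ℝ) (n k : ℕ) : ℝ :=
  (k.factorial : ℝ)⁻¹ *
    ∑ j ∈ Finset.range (k + 1), (-1 : ℝ) ^ (k - j) * (k.choose j) * ffl (j : ℝ) n lam

/-- Formal degenerate exponential `e_λ`. -/
def degExp (lam : ℝ) : PowerSeries ℝ := PowerSeries.mk fun n => ffl 1 n lam / n.factorial

/-- Formal degenerate logarithm `Λ_λ` of `1+X`. -/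
def degLog (lam : ℝ) : PowerSeries ℝ :=
  lam⁻¹ • PowerSeries.mk fun n => if n = 0 then 0 else ff lam n / n.factorial

/-- Degenerate Stirling numbers of the first kind. -/
def S1d (lam : ℝ) (n k : ℕ) : ℝ := cN n ((k.factorial : ℝ)⁻¹ • (degLog lam) ^ k)

/-- Binomial series `(1+X)^c`. -/
def binser (c : ℝ) : PowerSeries ℝ := PowerSeries.mk fun n => ff c n / n.factorial

/-- Frobenius–Euler numbers of order `j`. -/
def FE (u : ℝ) (j n : ℕ) : ℝ :=
  cN n (((1 - u) • (PowerSeries.exp ℝ - PowerSeries.C u)⁻¹) ^ j)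

/-!
`pcomp` agrees with `PowerSeries.subst` on series without constant term, so it is multiplicative
and `c_n(F ∘ G) = ∑ⱼ c_j(F) · c_n(G^j / j!)`. Since `(1 + X) L' = 1`, the numbers `c_j(L^k / k!)`
obey the recurrence `S₁(j+1, k+1) = S₁(j, k) - j S₁(j, k+1)` of the Stirling numbers, with the
same boundary values. Finally `G = pX (1 - (p-1)X)⁻¹`, so `G^j = p^j X^j (1 - (p-1)X)^{-j}` has
binomial coefficients, which gives `c_n(G^j / j!) = binom(n,j) (n-1)_{n-j} p^j (p-1)^{n-j}`.
-/

lemma coeff_pow_eq_zero_of_lt {R : Type*} [CommSemiring R] {G : R⟦X⟧}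
    (hG : constantCoeff G = 0) {j n : ℕ} (h : n < j) : coeff n (G ^ j) = 0 :=
  X_pow_dvd_iff.mp (pow_dvd_pow_of_dvd (X_dvd_iff.mpr hG) j) n h

lemma pcomp_eq_subst {G : ℝ⟦X⟧} (hG : constantCoeff G = 0) (F : ℝ⟦X⟧) :
    pcomp F G = F.subst G := by
  ext n
  rw [coeff_subst' (HasSubst.of_constantCoeff_zero' hG), pcomp, coeff_mk,
    finsum_eq_sum_of_support_subset _ (s := range (n + 1))]
  · rfl
  · intro j hj
    simp only [Function.mem_support, coe_range, Set.mem_Iio] at hj ⊢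
    by_contra! hnj
    exact hj (by simp [coeff_pow_eq_zero_of_lt hG (by omega : n < j)])

lemma cN_pcomp (F G : ℝ⟦X⟧) (n : ℕ) :
    cN n (pcomp F G) = ∑ j ∈ range (n + 1), cN j F * cN n ((j.factorial : ℝ)⁻¹ • G ^ j) := by
  simp only [cN, pcomp, coeff_mk, coeff_smul, smul_eq_mul, mul_sum]
  refine sum_congr rfl fun j _ => ?_
  field_simp

lemma constantCoeff_L : constantCoeff L = 0 := by
  simp [← coeff_zero_eq_constantCoeff_apply, L]

lemma one_add_X_mul_derivative_L : (1 + X) * d⁄dX ℝ L = 1 := by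
  ext m
  rcases m with _ | m
  · rw [add_mul, one_mul, map_add, coeff_zero_X_mul, coeff_derivative]
    simp [L]
  · rw [add_mul, one_mul, map_add, coeff_succ_X_mul, coeff_derivative, coeff_derivative, coeff_one]
    simp only [L, coeff_mk, Nat.add_eq_zero_iff, one_ne_zero, and_false, if_false]
    push_cast
    field_simp
    ring

lemma one_add_X_mul_derivative_L_pow (k : ℕ) :
    (1 + X) * d⁄dX ℝ (L ^ (k + 1)) = ((k : ℝ) + 1) • L ^ k := by
  rw [Derivation.leibniz_pow, add_tsub_cancel_right, smul_eq_mul, mul_smul_comm, mul_left_comm,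
    one_add_X_mul_derivative_L, mul_one, ← Nat.cast_smul_eq_nsmul ℝ]
  push_cast
  rfl

lemma coeff_X_mul_derivative (F : ℝ⟦X⟧) (j : ℕ) :
    coeff j (X * d⁄dX ℝ F) = j * coeff j F := by
  rcases j with _ | j
  · simp
  · rw [coeff_succ_X_mul, coeff_derivative]
    push_cast
    ring

lemma cN_inv_factorial_smul_L_pow_succ_succ (j k : ℕ) :
    cN (j + 1) (((k + 1).factorial : ℝ)⁻¹ • L ^ (k + 1))
      = cN j ((k.factorial : ℝ)⁻¹ • L ^ k)
        - j * cN j (((k + 1).factorial : ℝ)⁻¹ • L ^ (k + 1)) := by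
  have h := congrArg (coeff j) (one_add_X_mul_derivative_L_pow k)
  rw [add_mul, one_mul, map_add, coeff_X_mul_derivative, coeff_derivative, coeff_smul,
    smul_eq_mul] at h
  simp only [cN, coeff_smul, smul_eq_mul, Nat.factorial_succ]
  push_cast
  field_simp
  linear_combination h

lemma fallingPoly_eq_descPochhammer (n : ℕ) : fallingPoly n = descPochhammer ℝ n := by
  apply Polynomial.funext
  intro y
  rw [descPochhammer_eval_eq_prod_range, fallingPoly, Polynomial.eval_prod]
  simp

lemma S1_succ_zero (j : ℕ) : S1 (j + 1) 0 = 0 := by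
  rw [S1, Polynomial.coeff_zero_eq_eval_zero, fallingPoly_eq_descPochhammer,
    descPochhammer_eval_zero, if_neg j.succ_ne_zero]

lemma S1_succ_succ (j k : ℕ) : S1 (j + 1) (k + 1) = S1 j k - j * S1 j (k + 1) := by
  rw [S1, fallingPoly, prod_range_succ, ← fallingPoly, mul_sub, Polynomial.coeff_sub,
    Polynomial.coeff_mul_X, Polynomial.coeff_mul_C, mul_comm, S1, S1]

lemma S1_eq_zero_of_lt {j k : ℕ} (h : j < k) : S1 j k = 0 := by
  rw [S1, fallingPoly_eq_descPochhammer]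
  exact Polynomial.coeff_eq_zero_of_natDegree_lt (by rwa [descPochhammer_natDegree])

lemma cN_inv_factorial_smul_L_pow (j k : ℕ) : cN j ((k.factorial : ℝ)⁻¹ • L ^ k) = S1 j k := by
  induction j generalizing k with
  | zero =>
    rcases k with _ | k
    · simp [cN, S1, fallingPoly]
    · simp [cN, S1, fallingPoly, constantCoeff_L, Polynomial.coeff_one]
  | succ j ih =>
    rcases k with _ | k
    · simp [cN, S1_succ_zero, coeff_one]
    · rw [cN_inv_factorial_smul_L_pow_succ_succ, ih, ih, S1_succ_succ]

lemma ff_natCast (m k : ℕ) : ff m k = m.descFactorial k := by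
  rw [ff, ← descPochhammer_eval_eq_prod_range, descPochhammer_eval_eq_descFactorial]

lemma inv_one_add_smul_X {K : Type*} [Field K] (c : K) :
    (1 + c • X : K⟦X⟧)⁻¹ = rescale (-c) (mk 1) := by
  have hc : constantCoeff (1 + c • X : K⟦X⟧) ≠ 0 := by simp
  have h : rescale (-c) (1 - X) = (1 + c • X : K⟦X⟧) := by
    rw [map_sub, map_one, rescale_X, smul_eq_C_mul, map_neg]
    ring
  rw [inv_eq_iff_mul_eq_one hc, ← h, ← map_mul, mk_one_mul_one_sub_eq_one, map_one]

lemma factorial_mul_choose_eq_choose_mul_descFactorial_mul_factorial (m d : ℕ) :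
    (m + (d + 1)).factorial * (d + m).choose d
      = (m + (d + 1)).choose (d + 1) * (m + d).descFactorial m * (d + 1).factorial := by
  rw [← Nat.add_choose_mul_factorial_mul_factorial, Nat.descFactorial_eq_factorial_mul_choose,
    add_comm d m, Nat.choose_symm_add]
  ring

lemma cN_inv_factorial_smul_pow_geom (a c : ℝ) (n j : ℕ) :
    cN n ((j.factorial : ℝ)⁻¹ • (a • X * (1 + c • X)⁻¹) ^ j)
      = n.choose j * ff ((n : ℝ) - 1) (n - j) * a ^ j * (-c) ^ (n - j) := by
  rcases j with _ | d
  · rcases n with _ | m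
    · simp [cN, ff]
    · simp [cN, coeff_one, ff_natCast]
  have hpow : (a • X * (1 + c • X)⁻¹ : ℝ⟦X⟧) ^ (d + 1)
      = a ^ (d + 1) • (X ^ (d + 1) * rescale (-c) (mk fun i => ((d + i).choose d : ℝ))) := by
    rw [inv_one_add_smul_X, smul_mul_assoc, smul_pow, mul_pow, ← map_pow,
      mk_one_pow_eq_mk_choose_add]
  rw [cN, hpow, smul_smul, coeff_smul, coeff_X_pow_mul', smul_eq_mul]
  split_ifs with hdn
  · obtain ⟨m, rfl⟩ := Nat.exists_eq_add_of_le' hdn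
    have hn : ((m + (d + 1) : ℕ) : ℝ) - 1 = (m + d : ℕ) := by
      push_cast
      ring
    rw [coeff_rescale, coeff_mk, Nat.add_sub_cancel, hn, ff_natCast]
    have h := factorial_mul_choose_eq_choose_mul_descFactorial_mul_factorial m d
    replace h := congrArg (Nat.cast (R := ℝ)) h
    push_cast at h
    field_simp
    linear_combination a ^ (d + 1) * (-c) ^ m * h
  · simp [Nat.choose_eq_zero_of_lt (not_le.mp hdn)]

theorem stmt9_general (p : ℝ) (n k : ℕ) :
    cN n ((k.factorial : ℝ)⁻¹ •
        (pcomp L (p • PowerSeries.X * (1 + (1 - p) • PowerSeries.X)⁻¹)) ^ k)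
      = ∑ j ∈ Finset.Icc k n,
          (n.choose j : ℝ) * ff ((n : ℝ) - 1) (n - j) * p ^ j * (p - 1) ^ (n - j) * S1 j k := by
  set G : ℝ⟦X⟧ := p • X * (1 + (1 - p) • X)⁻¹
  have hG : constantCoeff G = 0 := by simp [G]
  have hsubst := HasSubst.of_constantCoeff_zero' hG
  rw [pcomp_eq_subst hG, ← subst_pow hsubst, ← subst_smul hsubst, ← pcomp_eq_subst hG, cN_pcomp]
  simp_rw [cN_inv_factorial_smul_L_pow, G, cN_inv_factorial_smul_pow_geom, neg_sub]
  refine (sum_subset (fun j hj => ?_) fun j _ hj => ?_).symm.trans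
    (sum_congr rfl fun j _ => by ring)
  · simp only [mem_Icc, mem_range] at hj ⊢
    omega
  · have hjk : j < k := by
      simp only [mem_Icc, mem_range] at *
      omega
    rw [S1_eq_zero_of_lt hjk, zero_mul]

theorem stmt9 (p : ℝ) (hp0 : 0 < p) (hp1 : p < 1) (n k : ℕ) (hkn : k ≤ n) :
    cN n ((k.factorial : ℝ)⁻¹ •
        (pcomp L (p • PowerSeries.X * (1 + (1 - p) • PowerSeries.X)⁻¹)) ^ k)
      = ∑ j ∈ Finset.Icc k n,
          (n.choose j : ℝ) * ff ((n : ℝ) - 1) (n - j) * p ^ j * (p - 1) ^ (n - j) * S1 j k :=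
  stmt9_general p n k
end
end

section
/- Let b > 0 (uniform distribution on (0,b)). Set U := Σ_{n≥0} ( b^n/(n+1) )·X^n/n! ∈ ℝ⟦X⟧ (the formal series of (e^{bt}-1)/(bt)). Then for all natural numbers n ≥ k: c_n( (U-1)^k / k! ) = (b^n/k!)·Σ_{j=0}^{k} binom(k,j)·binom(n+j,j)^{-1}·(-1)^{k-j}·S₂(n+j,j). -/
open PowerSeries Finset

noncomputable section

/-! With `U₁ := (e^X - 1)/X` we have `U = U₁(bX)` and `X^j U₁^j = (e^X - 1)^j = Σ_m j! S₂(m, j) X^m/m!`,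
so the coefficient of `X^n` in `U^j` is `b^n j! S₂(n+j, j)/(n+j)!`. Expanding `(U - 1)^k` binomially
and using `n! j!/(n+j)! = binom(n+j, j)⁻¹` gives the theorem. -/

theorem PowerSeries.coeff_sub_one_pow {R : Type*} [CommRing R] (F : R⟦X⟧) (k n : ℕ) :
    coeff n ((F - 1) ^ k) =
      ∑ j ∈ range (k + 1), (-1 : R) ^ (k - j) * k.choose j * coeff n (F ^ j) := by
  rw [sub_eq_add_neg, add_pow, map_sum]
  refine sum_congr rfl fun j _ => ?_
  rw [mul_assoc, show (-1 : R⟦X⟧) ^ (k - j) * (k.choose j : R⟦X⟧) =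
    C ((-1 : R) ^ (k - j) * k.choose j) by simp, coeff_mul_C, mul_comm]

theorem coeff_exp_sub_one_pow (j m : ℕ) :
    coeff m ((exp ℝ - 1) ^ j) = j.factorial * S2 m j / m.factorial := by
  rw [coeff_sub_one_pow, S2, ← mul_assoc, mul_inv_cancel₀ (by positivity), one_mul, sum_div]
  refine sum_congr rfl fun i _ => ?_
  rw [exp_pow_eq_rescale_exp, coeff_rescale, coeff_exp]
  push_cast
  ring

/-- `(e^{bX} - 1)/(bX)`, the moment generating function of the uniform distribution on `(0, b)`. -/
def uniformMomentSeries (b : ℝ) : PowerSeries ℝ :=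
  mk fun m => (b ^ m / (m + 1 : ℝ)) / m.factorial

theorem uniformMomentSeries_eq_rescale (b : ℝ) :
    uniformMomentSeries b = rescale b (uniformMomentSeries 1) := by
  ext m
  simp only [uniformMomentSeries, coeff_rescale, coeff_mk, one_pow]
  ring

theorem X_mul_uniformMomentSeries_one : X * uniformMomentSeries 1 = exp ℝ - 1 := by
  ext (_ | m)
  · simp
  · rw [coeff_succ_X_mul, uniformMomentSeries, coeff_mk, map_sub, coeff_exp, coeff_one,
      if_neg m.succ_ne_zero, Nat.factorial_succ]
    push_cast
    field_simp
    ring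

theorem coeff_uniformMomentSeries_pow (b : ℝ) (j n : ℕ) :
    coeff n (uniformMomentSeries b ^ j) =
      b ^ n * (j.factorial * S2 (n + j) j / (n + j).factorial) := by
  rw [uniformMomentSeries_eq_rescale, ← map_pow, coeff_rescale, ← coeff_exp_sub_one_pow,
    ← X_mul_uniformMomentSeries_one, mul_pow, coeff_X_pow_mul]

theorem stmt17_general (b : ℝ) (n k : ℕ) :
    cN n ((k.factorial : ℝ)⁻¹ •
        ((PowerSeries.mk fun m => (b ^ m / (m + 1 : ℝ)) / m.factorial) - 1) ^ k)
      = b ^ n / (k.factorial : ℝ) *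
          ∑ j ∈ Finset.range (k + 1),
            (k.choose j : ℝ) * ((n + j).choose j : ℝ)⁻¹ * (-1 : ℝ) ^ (k - j) * S2 (n + j) j := by
  change cN n (_ • (uniformMomentSeries b - 1) ^ k) = _
  rw [cN, coeff_smul, smul_eq_mul, coeff_sub_one_pow, mul_sum, mul_sum, mul_sum]
  refine sum_congr rfl fun j _ => ?_
  rw [coeff_uniformMomentSeries_pow, ← Nat.choose_symm_add, Nat.cast_add_choose ℝ, inv_div]
  ring

theorem stmt17 (b : ℝ) (hb : 0 < b) (n k : ℕ) (hkn : k ≤ n) :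
    cN n ((k.factorial : ℝ)⁻¹ •
        ((PowerSeries.mk fun m => (b ^ m / (m + 1 : ℝ)) / m.factorial) - 1) ^ k)
      = b ^ n / (k.factorial : ℝ) *
          ∑ j ∈ Finset.range (k + 1),
            (k.choose j : ℝ) * ((n + j).choose j : ℝ)⁻¹ * (-1 : ℝ) ^ (k - j) * S2 (n + j) j :=
  stmt17_general b n k
end
end
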